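/- arXiv:1004.1386 — 3 statements merged into one kernel-verified Lean document; each statement's English description precedes it below -/
import Mathlib

section
/- Let ρ_n = (1 − 1/n)|0⟩⟨0| + (1/n²) Σ_{k=1}^{n} |k⟩⟨k| for an orthonormal sequence {|k⟩}_{k≥0} in a separable Hilbert space. Then ρ_n converges in trace norm to |0⟩⟨0|, while H_max(ρ_n) = 2 log tr√ρ_n converges to 2 as n → ∞, whereas H_max(|0⟩⟨0|) = 0. Hence the max-entropy ρ ↦ 2 log tr√ρ is not trace-norm continuous on density operators. -/
open scoped InnerProductSpace ComplexOrder
open ContinuousLinearMap Filter Topology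

set_option synthInstance.maxHeartbeats 1000000
set_option maxHeartbeats 1600000

noncomputable section

/-- The rank-one operator `|x⟩⟨y|`. -/
def dyad {H : Type*} [NormedAddCommGroup H] [InnerProductSpace ℂ H] (x y : H) :
    H →L[ℂ] H := (innerSL ℂ y).smulRight x

/-- The trace of an operator along a Hilbert basis (sum of real parts of the diagonal). -/
def trAlong {H : Type*} [NormedAddCommGroup H] [InnerProductSpace ℂ H] {ι : Type*}
    (e : HilbertBasis ι ℂ H) (T : H →L[ℂ] H) : ℝ :=
  ∑' i, RCLike.re ⟪e i, T (e i)⟫_ℂ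

/-- The complex trace of an operator along a Hilbert basis. -/
def trCAlong {H : Type*} [NormedAddCommGroup H] [InnerProductSpace ℂ H] {ι : Type*}
    (e : HilbertBasis ι ℂ H) (T : H →L[ℂ] H) : ℂ :=
  ∑' i, ⟪e i, T (e i)⟫_ℂ

/-- The absolute value `√(T†T)` of a bounded operator. -/
def absOp {H : Type*} [NormedAddCommGroup H] [InnerProductSpace ℂ H] [CompleteSpace H]
    (T : H →L[ℂ] H) : H →L[ℂ] H := CFC.sqrt (ContinuousLinearMap.adjoint T * T)

/-- The trace norm `‖T‖₁ = tr √(T†T)` along a Hilbert basis. -/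
def trNormAlong {H : Type*} [NormedAddCommGroup H] [InnerProductSpace ℂ H] [CompleteSpace H]
    {ι : Type*} (e : HilbertBasis ι ℂ H) (T : H →L[ℂ] H) : ℝ :=
  trAlong e (absOp T)

/-- `T` is trace class (w.r.t. the Hilbert basis `e`): the diagonal sum of `√(T†T)` converges. -/
def IsTraceClass {H : Type*} [NormedAddCommGroup H] [InnerProductSpace ℂ H] [CompleteSpace H]
    {ι : Type*} (e : HilbertBasis ι ℂ H) (T : H →L[ℂ] H) : Prop :=
  Summable fun i => RCLike.re ⟪e i, absOp T (e i)⟫_ℂ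

/-- An orthogonal projection: a self-adjoint idempotent bounded operator. -/
def IsOrthoProj {H : Type*} [NormedAddCommGroup H] [InnerProductSpace ℂ H] [CompleteSpace H]
    (P : H →L[ℂ] H) : Prop := IsSelfAdjoint P ∧ IsIdempotentElem P

/-- A realization of the Hilbert-space tensor product `H = H_A ⊗ H_B`: a bilinear map
`tmul` compatible with the inner products, with total range, together with the induced
tensor product `map` of bounded operators. -/
structure HilbertTensor (HA HB H : Type*) [NormedAddCommGroup HA] [InnerProductSpace ℂ HA]
    [NormedAddCommGroup HB] [InnerProductSpace ℂ HB]
    [NormedAddCommGroup H] [InnerProductSpace ℂ H] where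
  tmul : HA →ₗ[ℂ] HB →ₗ[ℂ] H
  inner_tmul : ∀ (a a' : HA) (b b' : HB),
    ⟪tmul a b, tmul a' b'⟫_ℂ = ⟪a, a'⟫_ℂ * ⟪b, b'⟫_ℂ
  dense_span : Dense ((Submodule.span ℂ {z : H | ∃ a b, z = tmul a b} : Submodule ℂ H) : Set H)
  map : (HA →L[ℂ] HA) → (HB →L[ℂ] HB) → (H →L[ℂ] H)
  map_tmul : ∀ (S : HA →L[ℂ] HA) (T : HB →L[ℂ] HB) (a : HA) (b : HB),
    map S T (tmul a b) = tmul (S a) (T b)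

/-- `Λ(ρ_AB|B) = inf { tr σ̃ : σ̃ ≥ 0 trace class, id_A ⊗ σ̃ ≥ ρ_AB }`, valued in `EReal`
(the infimum of the empty set being `⊤`, i.e. `H_min = -∞`). -/
def LamB {HA HB H : Type*} [NormedAddCommGroup HA] [InnerProductSpace ℂ HA]
    [NormedAddCommGroup HB] [InnerProductSpace ℂ HB] [CompleteSpace HB]
    [NormedAddCommGroup H] [InnerProductSpace ℂ H] [CompleteSpace H]
    (TP : HilbertTensor HA HB H) {κ : Type*} (f : HilbertBasis κ ℂ HB)
    (ρ : H →L[ℂ] H) : EReal :=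
  sInf {x : EReal | ∃ σ : HB →L[ℂ] HB, σ.IsPositive ∧ IsTraceClass f σ ∧
    ρ ≤ TP.map 1 σ ∧ x = (trAlong f σ : EReal)}

/-- `Λ(ρ_AB|σ_B) = inf { λ ∈ ℝ : λ·(id_A ⊗ σ_B) ≥ ρ_AB }`, valued in `EReal`. -/
def LamCond {HA HB H : Type*} [NormedAddCommGroup HA] [InnerProductSpace ℂ HA]
    [NormedAddCommGroup HB] [InnerProductSpace ℂ HB]
    [NormedAddCommGroup H] [InnerProductSpace ℂ H] [CompleteSpace H]
    (TP : HilbertTensor HA HB H) (ρ : H →L[ℂ] H) (σ : HB →L[ℂ] HB) : EReal :=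
  sInf {x : EReal | ∃ l : ℝ, x = (l : EReal) ∧ ρ ≤ l • TP.map 1 σ}

/-- The generalized fidelity `F̄(ρ,σ) = ‖√ρ√σ‖₁ + √((1-tr ρ)(1-tr σ))`. -/
def genFid {H : Type*} [NormedAddCommGroup H] [InnerProductSpace ℂ H] [CompleteSpace H]
    {ι : Type*} (e : HilbertBasis ι ℂ H) (ρ σ : H →L[ℂ] H) : ℝ :=
  trNormAlong e (CFC.sqrt ρ * CFC.sqrt σ) +
    Real.sqrt ((1 - trAlong e ρ) * (1 - trAlong e σ))

/-- The purified distance `P(ρ,σ) = √(1 - F̄(ρ,σ)²)`. -/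
def purifiedDist {H : Type*} [NormedAddCommGroup H] [InnerProductSpace ℂ H] [CompleteSpace H]
    {ι : Type*} (e : HilbertBasis ι ℂ H) (ρ σ : H →L[ℂ] H) : ℝ :=
  Real.sqrt (1 - (genFid e ρ σ) ^ 2)

/-- Positivity of a square matrix of operators, viewed as an operator on `Hⁿ`. -/
def MatPos {H : Type*} [NormedAddCommGroup H] [InnerProductSpace ℂ H] (n : ℕ)
    (M : Matrix (Fin n) (Fin n) (H →L[ℂ] H)) : Prop :=
  ∀ v : Fin n → H, 0 ≤ ∑ i, ∑ j, ⟪v i, M i j (v j)⟫_ℂ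

/-- Complete positivity of a linear map on operators. -/
def IsCPMap {H : Type*} [NormedAddCommGroup H] [InnerProductSpace ℂ H]
    (E : (H →L[ℂ] H) →ₗ[ℂ] (H →L[ℂ] H)) : Prop :=
  ∀ (n : ℕ) (M : Matrix (Fin n) (Fin n) (H →L[ℂ] H)),
    MatPos n M → MatPos n (fun i j => E (M i j))

end

noncomputable section

/-! All operators involved are diagonal in the orthonormal family `v`, so square roots, absolute
values and traces act on the eigenvalues: `‖ρ_n - |0⟩⟨0|‖₁ = 1/n + n · n⁻² = 2/n`, whereas
`tr √ρ_n = √(1 - 1/n) + n · n⁻¹ → 2`. The `n` small eigenvalues `n⁻²` vanish in trace norm, but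
their square roots add up to `1`. -/

open InnerProductSpace

section DiagOp

variable {H : Type*} [NormedAddCommGroup H] [InnerProductSpace ℂ H] {κ : Type*}

lemma dyad_eq_rankOne (x y : H) : dyad x y = rankOne ℂ x y := rfl

def diagOp (v : κ → H) (s : Finset κ) (c : κ → ℝ) : H →L[ℂ] H :=
  ∑ k ∈ s, c k • rankOne ℂ (v k) (v k)

variable (v : κ → H) (s : Finset κ)

lemma diagOp_congr {c d : κ → ℝ} (h : ∀ k ∈ s, c k = d k) : diagOp v s c = diagOp v s d :=
  Finset.sum_congr rfl fun k hk => by rw [h k hk]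

lemma diagOp_apply (c : κ → ℝ) (x : H) :
    diagOp v s c x = ∑ k ∈ s, (c k * ⟪v k, x⟫_ℂ) • v k := by
  rw [diagOp, sum_apply]
  refine Finset.sum_congr rfl fun k _ => ?_
  rw [smul_apply, rankOne_apply, ← Complex.coe_smul, smul_smul]

lemma diagOp_mul_diagOp (hv : Orthonormal ℂ v) (c d : κ → ℝ) :
    diagOp v s c * diagOp v s d = diagOp v s (c * d) := by
  ext x
  change diagOp v s c (diagOp v s d x) = _
  rw [diagOp_apply, diagOp_apply, diagOp_apply]
  refine Finset.sum_congr rfl fun k hk => ?_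
  rw [hv.inner_right_sum _ hk, Pi.mul_apply, Complex.ofReal_mul, mul_assoc]

lemma diagOp_nonneg [CompleteSpace H] {c : κ → ℝ} (hc : ∀ k ∈ s, 0 ≤ c k) :
    0 ≤ diagOp v s c := by
  refine (nonneg_iff_isPositive _).mpr (isPositive_sum s fun k hk => ?_)
  rw [RCLike.real_smul_eq_coe_smul (K := ℂ)]
  exact (isPositive_rankOne_self _).smul_of_nonneg (Complex.zero_le_real.mpr (hc k hk))

lemma isSelfAdjoint_diagOp [CompleteSpace H] (c : κ → ℝ) : IsSelfAdjoint (diagOp v s c) :=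
  isSelfAdjoint_sum s fun _ _ =>
    .smul (IsSelfAdjoint.all _) (isPositive_rankOne_self _).isSelfAdjoint

lemma trAlong_diagOp {ι : Type*} (e : HilbertBasis ι ℂ H) (c : κ → ℝ) :
    trAlong e (diagOp v s c) = ∑ k ∈ s, c k * ‖v k‖ ^ 2 := by
  have h : HasSum (fun i => ⟪e i, diagOp v s c (e i)⟫_ℂ) (∑ k ∈ s, (c k : ℂ) * ⟪v k, v k⟫_ℂ) := by
    simp only [diagOp_apply, inner_sum, inner_smul_right]
    exact hasSum_sum fun k _ => by
      simpa only [mul_assoc] using (e.hasSum_inner_mul_inner (v k) (v k)).mul_left (c k : ℂ)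
  rw [trAlong, (RCLike.hasSum_re ℂ h).tsum_eq]
  simp [inner_self_eq_norm_sq_to_K, ← Complex.ofReal_pow]

lemma cfcSqrt_diagOp [CompleteSpace H] (hv : Orthonormal ℂ v) {c : κ → ℝ}
    (hc : ∀ k ∈ s, 0 ≤ c k) : CFC.sqrt (diagOp v s c) = diagOp v s (fun k => √(c k)) := by
  rw [CFC.sqrt_eq_iff _ _ (diagOp_nonneg v s hc) (diagOp_nonneg v s fun k _ => Real.sqrt_nonneg _),
    diagOp_mul_diagOp v s hv]
  exact diagOp_congr v s fun k hk => Real.mul_self_sqrt (hc k hk)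

lemma absOp_diagOp [CompleteSpace H] (hv : Orthonormal ℂ v) (c : κ → ℝ) :
    absOp (diagOp v s c) = diagOp v s (fun k => |c k|) := by
  rw [absOp, ← star_eq_adjoint, (isSelfAdjoint_diagOp v s c).star_eq, diagOp_mul_diagOp v s hv,
    cfcSqrt_diagOp v s hv (c := c * c) fun k _ => mul_self_nonneg (c k)]
  exact diagOp_congr v s fun k _ => Real.sqrt_mul_self_eq_abs (c k)

end DiagOp

section TwoLevel

variable {H : Type*} [NormedAddCommGroup H] [InnerProductSpace ℂ H] (v : ℕ → H) (n : ℕ)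

def twoLevel (a b : ℝ) : H →L[ℂ] H :=
  a • dyad (v 0) (v 0) + b • ∑ k ∈ Finset.Icc 1 n, dyad (v k) (v k)

lemma twoLevel_eq_diagOp (a b : ℝ) :
    twoLevel v n a b = diagOp v (insert 0 (Finset.Icc 1 n)) (fun k => if k = 0 then a else b) := by
  rw [diagOp, Finset.sum_insert (by simp), if_pos rfl, twoLevel, Finset.smul_sum]
  congr 1
  exact Finset.sum_congr rfl fun k hk => by
    rw [if_neg (Nat.one_le_iff_ne_zero.mp (Finset.mem_Icc.mp hk).1), dyad_eq_rankOne]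

lemma dyad_eq_twoLevel : dyad (v 0) (v 0) = twoLevel v n 1 0 := by
  simp [twoLevel]

lemma twoLevel_sub (a b a' b' : ℝ) :
    twoLevel v n a b - twoLevel v n a' b' = twoLevel v n (a - a') (b - b') := by
  simp only [twoLevel, sub_smul]
  abel

lemma trAlong_twoLevel {ι : Type*} (e : HilbertBasis ι ℂ H) (hv : ∀ k, ‖v k‖ = 1) (a b : ℝ) :
    trAlong e (twoLevel v n a b) = a + n * b := by
  rw [twoLevel_eq_diagOp, trAlong_diagOp, Finset.sum_insert (by simp), if_pos rfl,
    Finset.sum_congr rfl fun k hk => by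
      rw [if_neg (Nat.one_le_iff_ne_zero.mp (Finset.mem_Icc.mp hk).1)]]
  simp [hv]

lemma cfcSqrt_twoLevel [CompleteSpace H] (hv : Orthonormal ℂ v) {a b : ℝ} (ha : 0 ≤ a)
    (hb : 0 ≤ b) : CFC.sqrt (twoLevel v n a b) = twoLevel v n √a √b := by
  rw [twoLevel_eq_diagOp, cfcSqrt_diagOp _ _ hv fun k _ => by split_ifs <;> assumption,
    twoLevel_eq_diagOp]
  exact diagOp_congr _ _ fun k _ => by split_ifs <;> rfl

lemma absOp_twoLevel [CompleteSpace H] (hv : Orthonormal ℂ v) (a b : ℝ) :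
    absOp (twoLevel v n a b) = twoLevel v n |a| |b| := by
  rw [twoLevel_eq_diagOp, absOp_diagOp _ _ hv, twoLevel_eq_diagOp]
  exact diagOp_congr _ _ fun k _ => by split_ifs <;> rfl

end TwoLevel

lemma tendsto_two_mul_logb_sqrt_one_sub_add_one :
    Tendsto (fun n : ℕ => 2 * Real.logb 2 (√(1 - 1 / n) + 1)) atTop (𝓝 2) := by
  have h : Tendsto (fun n : ℕ => √(1 - 1 / n) + 1) atTop (𝓝 2) := by
    simpa [one_add_one_eq_two] using
      ((tendsto_const_nhds (x := (1 : ℝ)).sub tendsto_one_div_atTop_nhds_zero_nat).sqrt).add_const 1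
  simpa using (h.logb (b := 2) two_ne_zero).const_mul 2

theorem max_entropy_not_continuous_general
    {H : Type*} [NormedAddCommGroup H] [InnerProductSpace ℂ H] [CompleteSpace H]
    {ι : Type*} (e : HilbertBasis ι ℂ H)
    (v : ℕ → H) (hv : Orthonormal ℂ v)
    (ρ : ℕ → H →L[ℂ] H)
    (hρ : ∀ n, ρ n = ((1 : ℝ) - 1 / n) • dyad (v 0) (v 0)
        + ((1 : ℝ) / (n : ℝ) ^ 2) • ∑ k ∈ Finset.Icc 1 n, dyad (v k) (v k)) :
    Tendsto (fun n => trNormAlong e (ρ n - dyad (v 0) (v 0))) atTop (nhds 0) ∧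
    Tendsto (fun n => 2 * Real.logb 2 (trAlong e (CFC.sqrt (ρ n)))) atTop (nhds 2) ∧
    2 * Real.logb 2 (trAlong e (CFC.sqrt (dyad (v 0) (v 0)))) = 0 ∧
    ¬ Tendsto (fun n => 2 * Real.logb 2 (trAlong e (CFC.sqrt (ρ n)))) atTop
        (nhds (2 * Real.logb 2 (trAlong e (CFC.sqrt (dyad (v 0) (v 0)))))) := by
  have hρ' (n : ℕ) : ρ n = twoLevel v n (1 - 1 / n) (1 / n ^ 2) := hρ n
  have hdist : ∀ n ≥ 1, trNormAlong e (ρ n - dyad (v 0) (v 0)) = 2 / n := by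
    intro n hn
    rw [hρ', dyad_eq_twoLevel v n, twoLevel_sub, trNormAlong, absOp_twoLevel v n hv,
      trAlong_twoLevel v n e hv.1]
    rw [sub_sub_cancel_left, sub_zero, abs_neg, abs_of_nonneg (by positivity),
      abs_of_nonneg (by positivity)]
    field_simp
    ring
  have htr : ∀ n ≥ 1, trAlong e (CFC.sqrt (ρ n)) = √(1 - 1 / n) + 1 := by
    intro n hn
    have h1n : (1 : ℝ) / n ≤ 1 := (div_le_one (by positivity)).mpr (by exact_mod_cast hn)
    rw [hρ', cfcSqrt_twoLevel v n hv (sub_nonneg.mpr h1n) (by positivity),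
      trAlong_twoLevel v n e hv.1, ← one_div_pow, Real.sqrt_sq (by positivity),
      mul_one_div_cancel (by positivity)]
  have hH0 : 2 * Real.logb 2 (trAlong e (CFC.sqrt (dyad (v 0) (v 0)))) = 0 := by
    rw [dyad_eq_twoLevel v 0, cfcSqrt_twoLevel v 0 hv zero_le_one le_rfl,
      trAlong_twoLevel v 0 e hv.1]
    simp
  have hH : Tendsto (fun n => 2 * Real.logb 2 (trAlong e (CFC.sqrt (ρ n)))) atTop (𝓝 2) :=
    tendsto_two_mul_logb_sqrt_one_sub_add_one.congr' <|
      eventually_atTop.mpr ⟨1, fun n hn => by simp only [htr n hn]⟩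
  refine ⟨?_, hH, hH0, fun h => ?_⟩
  · exact (tendsto_const_div_atTop_nhds_zero_nat 2).congr' <|
      eventually_atTop.mpr ⟨1, fun n hn => (hdist n hn).symm⟩
  · rw [hH0] at h
    exact two_ne_zero (tendsto_nhds_unique hH h)

/-- The states `ρ_n = (1-1/n)|0⟩⟨0| + n⁻² Σ_{k=1}^n |k⟩⟨k|` converge in
trace norm to `|0⟩⟨0|`, yet `H_max(ρ_n) = 2 log₂ tr √ρ_n → 2` while
`H_max(|0⟩⟨0|) = 0`; hence `H_max` is not trace-norm continuous. -/
theorem max_entropy_not_continuous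
    {H : Type*} [NormedAddCommGroup H] [InnerProductSpace ℂ H] [CompleteSpace H]
    [TopologicalSpace.SeparableSpace H] {ι : Type*} (e : HilbertBasis ι ℂ H)
    (v : ℕ → H) (hv : Orthonormal ℂ v)
    (ρ : ℕ → H →L[ℂ] H)
    (hρ : ∀ n, ρ n = ((1 : ℝ) - 1 / n) • dyad (v 0) (v 0)
        + ((1 : ℝ) / (n : ℝ) ^ 2) • ∑ k ∈ Finset.Icc 1 n, dyad (v k) (v k)) :
    Tendsto (fun n => trNormAlong e (ρ n - dyad (v 0) (v 0))) atTop (nhds 0) ∧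
    Tendsto (fun n => 2 * Real.logb 2 (trAlong e (CFC.sqrt (ρ n)))) atTop (nhds 2) ∧
    2 * Real.logb 2 (trAlong e (CFC.sqrt (dyad (v 0) (v 0)))) = 0 ∧
    ¬ Tendsto (fun n => 2 * Real.logb 2 (trAlong e (CFC.sqrt (ρ n)))) atTop
        (nhds (2 * Real.logb 2 (trAlong e (CFC.sqrt (dyad (v 0) (v 0)))))) :=
  max_entropy_not_continuous_general e v hv ρ hρ

end
end

section
/- Data processing inequality for min-entropy: for any positive trace-class operator ρ_ABC on H_A ⊗ H_B ⊗ H_C (separable Hilbert spaces), Λ(ρ_AB|B) ≤ Λ(ρ_ABC|BC), where Λ(ρ_XY|Y) := inf{ tr σ̃_Y : σ̃_Y positive trace class, id_X ⊗ σ̃_Y ≥ ρ_XY } and ρ_AB = tr_C ρ_ABC. Equivalently H_min(ρ_ABC|BC) ≤ H_min(ρ_AB|B). -/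
open scoped InnerProductSpace ComplexOrder
open ContinuousLinearMap Filter Topology

set_option synthInstance.maxHeartbeats 1000000
set_option maxHeartbeats 1600000

/-!
Let `σ̃` on `H_B ⊗ H_C` be feasible for `Λ(ρ_ABC|BC)`, i.e. positive, trace class and with
`ρ_ABC ≤ id_A ⊗ σ̃`. Its partial trace `τ = tr_C σ̃` is feasible for `Λ(ρ_AB|B)` and has
`tr τ ≤ tr σ̃`, which gives the inequality of the infima.

The partial trace is built as `τ = Φ† Φ` for `Φ u = (√σ̃ (u ⊗ cᵢ))ᵢ ∈ ℓ²(H_B ⊗ H_C)`; the vectors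
`u ⊗ cᵢ` (for a unit `u`) and `e_j ⊗ cᵢ` are orthonormal, so the diagonal sums of `σ̃` along them
are bounded by `tr σ̃`, which makes `Φ` bounded and `τ` trace class. Taking partial traces preserves
the order `0 ≤ ρ_ABC ≤ id_A ⊗ σ̃`: the quadratic forms of `ρ_AB` and `id_A ⊗ τ` on a finite sum of
product vectors are series of quadratic forms of `ρ_ABC` and `id_A ⊗ σ̃`, and such finite sums are
dense in `H_A ⊗ H_B`.
-/

noncomputable section

theorem HilbertBasis.hasSum_norm_inner_sq {H ι : Type*} [NormedAddCommGroup H]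
    [InnerProductSpace ℂ H] (e : HilbertBasis ι ℂ H) (x : H) :
    HasSum (fun k => ‖⟪e k, x⟫_ℂ‖ ^ 2) (‖x‖ ^ 2) := by
  have h := (e.hasSum_inner_mul_inner x x).mapL Complex.reCLM
  rw [Complex.reCLM_apply, ← RCLike.re_to_complex, inner_self_eq_norm_sq] at h
  convert h using 2 with k
  rw [Complex.reCLM_apply, ← inner_conj_symm x, Complex.conj_mul']
  norm_cast

theorem ContinuousLinearMap.IsPositive.of_inner_nonneg {H : Type*} [NormedAddCommGroup H]
    [InnerProductSpace ℂ H] {T : H →L[ℂ] H} (h : ∀ x, 0 ≤ ⟪x, T x⟫_ℂ) : T.IsPositive := by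
  refine (isPositive_iff_complex T).mpr fun x => ?_
  obtain ⟨hre, him⟩ := Complex.nonneg_iff.mp (h x)
  have hreal : ⟪T x, x⟫_ℂ = ⟪x, T x⟫_ℂ := by
    rw [← inner_conj_symm, Complex.conj_eq_iff_im.mpr him.symm]
  rw [hreal]
  exact ⟨Complex.ext rfl (by simp [him]), hre⟩

theorem summable_and_tsum_le_of_tsum_ofReal_le {ι : Type*} {f : ι → ℝ} {K : ℝ}
    (hf : ∀ i, 0 ≤ f i) (hK : 0 ≤ K) (h : ∑' i, ENNReal.ofReal (f i) ≤ ENNReal.ofReal K) :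
    Summable f ∧ ∑' i, f i ≤ K := by
  have hs : Summable f := by
    simpa only [ENNReal.toReal_ofReal (hf _)] using
      ENNReal.summable_toReal (ne_top_of_le_ne_top ENNReal.ofReal_ne_top h)
  refine ⟨hs, (ENNReal.ofReal_le_ofReal_iff hK).mp ?_⟩
  rwa [ENNReal.ofReal_tsum_of_nonneg hf hs]

namespace ContinuousLinearMap.IsPositive

variable {H : Type*} [NormedAddCommGroup H] [InnerProductSpace ℂ H] {σ : H →L[ℂ] H}
  {ι : Type*} (e : HilbertBasis ι ℂ H)

theorem nonneg (hσ : σ.IsPositive) : 0 ≤ σ :=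
  (nonneg_iff_isPositive σ).mpr hσ

theorem trAlong_nonneg (hσ : σ.IsPositive) : 0 ≤ trAlong e σ :=
  tsum_nonneg fun _ => hσ.re_inner_nonneg_right _

variable [CompleteSpace H]

theorem inner_eq_inner_sqrt (hσ : σ.IsPositive) (x y : H) :
    ⟪x, σ y⟫_ℂ = ⟪CFC.sqrt σ x, CFC.sqrt σ y⟫_ℂ := by
  have hsqrt : (CFC.sqrt σ).IsPositive := (nonneg_iff_isPositive _).mp (CFC.sqrt_nonneg σ)
  conv_lhs => rw [← CFC.sqrt_mul_sqrt_self σ hσ.nonneg, _root_.mul_apply_eq_comp]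
  exact (hsqrt.isSymmetric x _).symm

theorem re_inner_self_eq_norm_sqrt_sq (hσ : σ.IsPositive) (x : H) :
    RCLike.re ⟪x, σ x⟫_ℂ = ‖CFC.sqrt σ x‖ ^ 2 := by
  rw [hσ.inner_eq_inner_sqrt]
  exact inner_self_eq_norm_sq _

theorem absOp_eq (hσ : σ.IsPositive) : absOp σ = σ := by
  rw [absOp, ← star_eq_adjoint, hσ.isSelfAdjoint.star_eq, ← sq, CFC.sqrt_sq σ hσ.nonneg]

theorem isTraceClass_iff (hσ : σ.IsPositive) :
    IsTraceClass e σ ↔ Summable fun k => RCLike.re ⟪e k, σ (e k)⟫_ℂ := by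
  rw [IsTraceClass, hσ.absOp_eq]

theorem norm_inner_le (hσ : σ.IsPositive) (x y : H) :
    ‖⟪x, σ y⟫_ℂ‖ ≤ (RCLike.re ⟪x, σ x⟫_ℂ + RCLike.re ⟪y, σ y⟫_ℂ) / 2 := by
  rw [hσ.inner_eq_inner_sqrt, hσ.re_inner_self_eq_norm_sqrt_sq, hσ.re_inner_self_eq_norm_sqrt_sq]
  nlinarith [norm_inner_le_norm (𝕜 := ℂ) (CFC.sqrt σ x) (CFC.sqrt σ y),
    sq_nonneg (‖CFC.sqrt σ x‖ - ‖CFC.sqrt σ y‖)]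

theorem summable_inner (hσ : σ.IsPositive) {ι : Type*} {u v : ι → H}
    (hu : Summable fun i => RCLike.re ⟪u i, σ (u i)⟫_ℂ)
    (hv : Summable fun i => RCLike.re ⟪v i, σ (v i)⟫_ℂ) :
    Summable fun i => ⟪u i, σ (v i)⟫_ℂ :=
  .of_norm_bounded ((hu.add hv).div_const 2) fun i => hσ.norm_inner_le (u i) (v i)

theorem tsum_ofReal_re_inner_le (hσ : σ.IsPositive) {κ : Type*} {v : κ → H}
    (hv : Orthonormal ℂ v) :
    ∑' j, ENNReal.ofReal (RCLike.re ⟪v j, σ (v j)⟫_ℂ)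
      ≤ ∑' k, ENNReal.ofReal (RCLike.re ⟪e k, σ (e k)⟫_ℂ) := by
  set S := CFC.sqrt σ
  have hS : (S : H →ₗ[ℂ] H).IsSymmetric :=
    ((nonneg_iff_isPositive S).mp (CFC.sqrt_nonneg σ)).isSymmetric
  have parseval (x : H) :
      ∑' k, ENNReal.ofReal (‖⟪e k, x⟫_ℂ‖ ^ 2) = ENNReal.ofReal (‖x‖ ^ 2) := by
    rw [← ENNReal.ofReal_tsum_of_nonneg (fun _ => by positivity)
      (e.hasSum_norm_inner_sq x).summable, (e.hasSum_norm_inner_sq x).tsum_eq]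
  have bessel (x : H) : ∑' j, ENNReal.ofReal (‖⟪v j, x⟫_ℂ‖ ^ 2) ≤ ENNReal.ofReal (‖x‖ ^ 2) := by
    rw [← ENNReal.ofReal_tsum_of_nonneg (fun _ => by positivity) (hv.inner_products_summable x)]
    exact ENNReal.ofReal_le_ofReal (hv.tsum_inner_products_le x)
  simp_rw [hσ.re_inner_self_eq_norm_sqrt_sq]
  calc ∑' j, ENNReal.ofReal (‖S (v j)‖ ^ 2)
      = ∑' k, ∑' j, ENNReal.ofReal (‖⟪v j, S (e k)⟫_ℂ‖ ^ 2) := by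
        have hswap (k : ι) (j : κ) : ‖⟪e k, S (v j)⟫_ℂ‖ = ‖⟪v j, S (e k)⟫_ℂ‖ := by
          rw [← norm_inner_symm]
          exact congrArg norm (hS (v j) (e k))
        simp_rw [← parseval, hswap]
        exact ENNReal.tsum_comm
    _ ≤ ∑' k, ENNReal.ofReal (‖S (e k)‖ ^ 2) := ENNReal.tsum_le_tsum fun k => bessel _

theorem ofReal_trAlong (hσ : σ.IsPositive) (htc : IsTraceClass e σ) :
    ENNReal.ofReal (trAlong e σ) = ∑' k, ENNReal.ofReal (RCLike.re ⟪e k, σ (e k)⟫_ℂ) :=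
  ENNReal.ofReal_tsum_of_nonneg (fun _ => hσ.re_inner_nonneg_right _)
    ((hσ.isTraceClass_iff e).mp htc)

theorem isTraceClass_and_trAlong_le (hσ : σ.IsPositive) {K : ℝ} (hK : 0 ≤ K)
    (h : ∑' k, ENNReal.ofReal (RCLike.re ⟪e k, σ (e k)⟫_ℂ) ≤ ENNReal.ofReal K) :
    IsTraceClass e σ ∧ trAlong e σ ≤ K := by
  rw [hσ.isTraceClass_iff]
  exact summable_and_tsum_le_of_tsum_ofReal_le (fun _ => hσ.re_inner_nonneg_right _) hK h

end ContinuousLinearMap.IsPositive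

theorem hasSum_inner_sum_map_sum {E F ι κ : Type*} [NormedAddCommGroup E] [InnerProductSpace ℂ E]
    [NormedAddCommGroup F] [InnerProductSpace ℂ F] [Fintype κ] (X : E →L[ℂ] E) (Y : F →L[ℂ] F)
    {f : κ → E} {g : κ → ι → F}
    (h : ∀ j k, HasSum (fun i => ⟪g j i, Y (g k i)⟫_ℂ) ⟪f j, X (f k)⟫_ℂ) :
    HasSum (fun i => ⟪∑ j, g j i, Y (∑ k, g k i)⟫_ℂ) ⟪∑ j, f j, X (∑ k, f k)⟫_ℂ := by
  simp only [map_sum, sum_inner, inner_sum]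
  exact hasSum_sum fun j _ => hasSum_sum fun k _ => h k j

namespace HilbertTensor

section Tensor

variable {HA HB H : Type*} [NormedAddCommGroup HA] [InnerProductSpace ℂ HA]
  [NormedAddCommGroup HB] [InnerProductSpace ℂ HB] [NormedAddCommGroup H] [InnerProductSpace ℂ H]
  (TP : HilbertTensor HA HB H)

theorem orthonormal_tmul {ι κ : Type*} {v : ι → HA} {w : κ → HB} (hv : Orthonormal ℂ v)
    (hw : Orthonormal ℂ w) : Orthonormal ℂ fun p : ι × κ => TP.tmul (v p.1) (w p.2) := by
  classical
  rw [orthonormal_iff_ite] at *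
  rintro ⟨i, k⟩ ⟨i', k'⟩
  rw [TP.inner_tmul, hv, hw]
  simp only [Prod.mk.injEq, ite_and, mul_ite, mul_one, mul_zero]
  split_ifs <;> rfl

theorem orthonormal_tmul_left {u : HA} (hu : ‖u‖ = 1) {κ : Type*} {w : κ → HB}
    (hw : Orthonormal ℂ w) : Orthonormal ℂ fun k => TP.tmul u (w k) := by
  classical
  rw [orthonormal_iff_ite] at *
  intro k k'
  rw [TP.inner_tmul, hw, inner_self_eq_norm_sq_to_K, hu]
  simp

theorem inner_tmul_map_one_tmul (T : HB →L[ℂ] HB) (x y : HA) (u w : HB) :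
    ⟪TP.tmul x u, TP.map 1 T (TP.tmul y w)⟫_ℂ = ⟪x, y⟫_ℂ * ⟪u, T w⟫_ℂ := by
  rw [TP.map_tmul, one_apply_eq_self, TP.inner_tmul]

theorem exists_eq_sum_tmul {z : H} (hz : z ∈ Submodule.span ℂ {z | ∃ a b, z = TP.tmul a b}) :
    ∃ (n : ℕ) (a : Fin n → HA) (b : Fin n → HB), z = ∑ j, TP.tmul (a j) (b j) := by
  obtain ⟨n, f, g, rfl⟩ := Submodule.mem_span_set'.mp hz
  choose a b hab using fun j => (g j).2
  exact ⟨n, fun j => f j • a j, b, Finset.sum_congr rfl fun j _ => by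
    rw [hab j, map_smul, LinearMap.smul_apply]⟩

theorem isPositive_of_inner_sum_tmul_nonneg {T : H →L[ℂ] H}
    (h : ∀ (n : ℕ) (a : Fin n → HA) (b : Fin n → HB),
      0 ≤ ⟪∑ j, TP.tmul (a j) (b j), T (∑ j, TP.tmul (a j) (b j))⟫_ℂ) :
    T.IsPositive := by
  refine .of_inner_nonneg fun z => TP.dense_span.induction (P := fun z => 0 ≤ ⟪z, T z⟫_ℂ)
    (fun z hz => ?_) (isClosed_le continuous_const (continuous_id.inner T.continuous)) z
  obtain ⟨n, a, b, rfl⟩ := TP.exists_eq_sum_tmul hz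
  exact h n a b

end Tensor

section PartialTrace

variable {HB HC HBC : Type*} [NormedAddCommGroup HB] [InnerProductSpace ℂ HB]
  [NormedAddCommGroup HC] [InnerProductSpace ℂ HC] [NormedAddCommGroup HBC]
  [InnerProductSpace ℂ HBC] (TP : HilbertTensor HB HC HBC) {ιC : Type*} (c : HilbertBasis ιC ℂ HC)

def IsPartialTrace (σ : HBC →L[ℂ] HBC) (τ : HB →L[ℂ] HB) : Prop :=
  ∀ u w, HasSum (fun i => ⟪TP.tmul u (c i), σ (TP.tmul w (c i))⟫_ℂ) ⟪u, τ w⟫_ℂ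

variable [CompleteSpace HBC] {ι : Type*} (e : HilbertBasis ι ℂ HBC) {σ : HBC →L[ℂ] HBC}

theorem tsum_ofReal_re_inner_tmul_le (hσ : σ.IsPositive) (u : HB) :
    ∑' i, ENNReal.ofReal (RCLike.re ⟪TP.tmul u (c i), σ (TP.tmul u (c i))⟫_ℂ)
      ≤ ENNReal.ofReal (‖u‖ ^ 2) * ∑' k, ENNReal.ofReal (RCLike.re ⟪e k, σ (e k)⟫_ℂ) := by
  rcases eq_or_ne u 0 with rfl | hu
  · simp
  set û : HB := (‖u‖⁻¹ : ℂ) • u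
  have hû : ‖û‖ = 1 := norm_smul_inv_norm hu
  have hu' : (‖u‖ : ℂ) • û = u := by simp [û, smul_smul, hu]
  have hsmul (t : ℝ) (x : HB) (i : ιC) :
      RCLike.re ⟪TP.tmul ((t : ℂ) • x) (c i), σ (TP.tmul ((t : ℂ) • x) (c i))⟫_ℂ
        = t ^ 2 * RCLike.re ⟪TP.tmul x (c i), σ (TP.tmul x (c i))⟫_ℂ := by
    simp only [map_smul, LinearMap.smul_apply, inner_smul_left, inner_smul_right,
      Complex.conj_ofReal, ← mul_assoc, ← Complex.ofReal_mul, RCLike.re_to_complex,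
      Complex.re_ofReal_mul, sq]
  clear_value û
  calc ∑' i, ENNReal.ofReal (RCLike.re ⟪TP.tmul u (c i), σ (TP.tmul u (c i))⟫_ℂ)
      = ENNReal.ofReal (‖u‖ ^ 2) *
          ∑' i, ENNReal.ofReal (RCLike.re ⟪TP.tmul û (c i), σ (TP.tmul û (c i))⟫_ℂ) := by
        simp_rw [← ENNReal.tsum_mul_left, ← ENNReal.ofReal_mul (sq_nonneg _), ← hsmul, hu']
    _ ≤ _ := by
        gcongr
        exact hσ.tsum_ofReal_re_inner_le e (TP.orthonormal_tmul_left hû c.orthonormal)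

theorem exists_partialTrace [CompleteSpace HB] (hσ : σ.IsPositive) (htc : IsTraceClass e σ) :
    ∃ τ : HB →L[ℂ] HB, τ.IsPositive ∧ TP.IsPartialTrace c σ τ := by
  set K := trAlong e σ
  have hK : 0 ≤ K := hσ.trAlong_nonneg e
  have hsq (u : HB) : Summable (fun i => ‖CFC.sqrt σ (TP.tmul u (c i))‖ ^ 2) ∧
      ∑' i, ‖CFC.sqrt σ (TP.tmul u (c i))‖ ^ 2 ≤ ‖u‖ ^ 2 * K := by
    simp_rw [← hσ.re_inner_self_eq_norm_sqrt_sq]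
    refine summable_and_tsum_le_of_tsum_ofReal_le (fun _ => hσ.re_inner_nonneg_right _)
      (by positivity) ?_
    rw [ENNReal.ofReal_mul (sq_nonneg _), hσ.ofReal_trAlong e htc]
    exact TP.tsum_ofReal_re_inner_tmul_le c e hσ u
  let Φ₀ : HB →ₗ[ℂ] lp (fun _ : ιC => HBC) 2 :=
    { toFun u := ⟨fun i => CFC.sqrt σ (TP.tmul u (c i)), memℓp_gen (by simpa using (hsq u).1)⟩
      map_add' u w := by ext i; simp only [map_add, LinearMap.add_apply]; rfl
      map_smul' a u := by ext i; simp only [map_smul, LinearMap.smul_apply]; rfl }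
  have hΦ₀ (u : HB) : ‖Φ₀ u‖ ≤ √K * ‖u‖ := by
    refine le_of_pow_le_pow_left₀ two_ne_zero (by positivity) ?_
    have hnorm : ‖Φ₀ u‖ ^ 2 = ∑' i, ‖CFC.sqrt σ (TP.tmul u (c i))‖ ^ 2 := by
      simpa [Φ₀] using lp.norm_rpow_eq_tsum (p := 2) (by norm_num) (Φ₀ u)
    rw [hnorm, mul_pow, Real.sq_sqrt hK, mul_comm]
    exact (hsq u).2
  let Φ := Φ₀.mkContinuous (√K) hΦ₀
  refine ⟨adjoint Φ ∘L Φ, isPositive_adjoint_comp_self Φ, fun u w => ?_⟩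
  rw [comp_apply, adjoint_inner_right]
  exact (lp.hasSum_inner (Φ u) (Φ w)).congr_fun fun i => hσ.inner_eq_inner_sqrt _ _

theorem IsPartialTrace.tsum_ofReal_re_inner_le {τ : HB →L[ℂ] HB}
    (hτ : TP.IsPartialTrace c σ τ) (hσ : σ.IsPositive) {ιB : Type*} (eB : HilbertBasis ιB ℂ HB) :
    ∑' j, ENNReal.ofReal (RCLike.re ⟪eB j, τ (eB j)⟫_ℂ)
      ≤ ∑' k, ENNReal.ofReal (RCLike.re ⟪e k, σ (e k)⟫_ℂ) := by
  calc ∑' j, ENNReal.ofReal (RCLike.re ⟪eB j, τ (eB j)⟫_ℂ)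
      = ∑' j, ∑' i, ENNReal.ofReal
          (RCLike.re ⟪TP.tmul (eB j) (c i), σ (TP.tmul (eB j) (c i))⟫_ℂ) := by
        refine tsum_congr fun j => ?_
        have hre := RCLike.hasSum_re ℂ (hτ (eB j) (eB j))
        rw [← hre.tsum_eq, ENNReal.ofReal_tsum_of_nonneg (fun _ => hσ.re_inner_nonneg_right _)
          hre.summable]
    _ = ∑' p : ιB × ιC, ENNReal.ofReal
          (RCLike.re ⟪TP.tmul (eB p.1) (c p.2), σ (TP.tmul (eB p.1) (c p.2))⟫_ℂ) :=
        ENNReal.tsum_prod.symm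
    _ ≤ _ := hσ.tsum_ofReal_re_inner_le e (TP.orthonormal_tmul eB.orthonormal c.orthonormal)

theorem IsPartialTrace.isTraceClass_and_trAlong_le [CompleteSpace HB] {τ : HB →L[ℂ] HB}
    (hτ : TP.IsPartialTrace c σ τ) (hτpos : τ.IsPositive) (hσ : σ.IsPositive)
    (htc : IsTraceClass e σ) {ιB : Type*} (eB : HilbertBasis ιB ℂ HB) :
    IsTraceClass eB τ ∧ trAlong eB τ ≤ trAlong e σ :=
  hτpos.isTraceClass_and_trAlong_le eB (hσ.trAlong_nonneg e)
    (hσ.ofReal_trAlong e htc ▸ hτ.tsum_ofReal_re_inner_le TP c e hσ eB)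

end PartialTrace

end HilbertTensor

theorem ContinuousLinearMap.inner_map_self_le_of_le {H : Type*} [NormedAddCommGroup H]
    [InnerProductSpace ℂ H] {X Y : H →L[ℂ] H} (h : X ≤ Y) (x : H) :
    ⟪x, X x⟫_ℂ ≤ ⟪x, Y x⟫_ℂ := by
  have := ((le_def X Y).mp h).inner_nonneg_right x
  rwa [sub_apply, inner_sub_right, sub_nonneg] at this

theorem le_of_partialTrace_le {HA HB HC HBC HAB HABC : Type*}
    [NormedAddCommGroup HA] [InnerProductSpace ℂ HA] [NormedAddCommGroup HB]
    [InnerProductSpace ℂ HB] [NormedAddCommGroup HC] [InnerProductSpace ℂ HC]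
    [NormedAddCommGroup HBC] [InnerProductSpace ℂ HBC] [NormedAddCommGroup HAB]
    [InnerProductSpace ℂ HAB] [NormedAddCommGroup HABC] [InnerProductSpace ℂ HABC]
    [CompleteSpace HABC]
    (TBC : HilbertTensor HB HC HBC) (TABC : HilbertTensor HA HBC HABC)
    (TAB : HilbertTensor HA HB HAB) {ιC : Type*} (c : ιC → HC)
    {X Y : HABC →L[ℂ] HABC} {X' Y' : HAB →L[ℂ] HAB} (hX : X.IsPositive) (hXY : X ≤ Y)
    (hX' : ∀ (x y : HA) (u w : HB), ⟪TAB.tmul x u, X' (TAB.tmul y w)⟫_ℂ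
        = ∑' i, ⟪TABC.tmul x (TBC.tmul u (c i)), X (TABC.tmul y (TBC.tmul w (c i)))⟫_ℂ)
    (hY' : ∀ (x y : HA) (u w : HB), HasSum
        (fun i => ⟪TABC.tmul x (TBC.tmul u (c i)), Y (TABC.tmul y (TBC.tmul w (c i)))⟫_ℂ)
        ⟪TAB.tmul x u, Y' (TAB.tmul y w)⟫_ℂ) :
    X' ≤ Y' := by
  set v : HA → HB → ιC → HABC := fun x u i => TABC.tmul x (TBC.tmul u (c i))
  -- `hX'` is a `tsum` identity only: the summability it needs comes from `0 ≤ X ≤ Y`.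
  have hdiag (x : HA) (u : HB) : Summable fun i => RCLike.re ⟪v x u i, X (v x u i)⟫_ℂ :=
    (RCLike.hasSum_re ℂ (hY' x x u u)).summable.of_nonneg_of_le
      (fun i => hX.re_inner_nonneg_right _)
      (fun i => (Complex.le_def.mp (inner_map_self_le_of_le hXY _)).1)
  rw [ContinuousLinearMap.le_def]
  refine TAB.isPositive_of_inner_sum_tmul_nonneg fun n a b => ?_
  have hXsum := hasSum_inner_sum_map_sum X' X (f := fun j => TAB.tmul (a j) (b j))
    (g := fun j => v (a j) (b j)) fun j k => by
      rw [hX']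
      exact (hX.summable_inner (hdiag _ _) (hdiag _ _)).hasSum
  have hYsum := hasSum_inner_sum_map_sum Y' Y (f := fun j => TAB.tmul (a j) (b j))
    (g := fun j => v (a j) (b j)) fun j k => hY' _ _ _ _
  rw [sub_apply, inner_sub_right, sub_nonneg]
  exact hasSum_le (fun i => inner_map_self_le_of_le hXY _) hXsum hYsum

theorem min_entropy_data_processing_general
    {HA HB HC HBC HAB HABC : Type*}
    [NormedAddCommGroup HA] [InnerProductSpace ℂ HA]
    [NormedAddCommGroup HB] [InnerProductSpace ℂ HB] [CompleteSpace HB]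
    [NormedAddCommGroup HC] [InnerProductSpace ℂ HC]
    [NormedAddCommGroup HBC] [InnerProductSpace ℂ HBC] [CompleteSpace HBC]
    [NormedAddCommGroup HAB] [InnerProductSpace ℂ HAB] [CompleteSpace HAB]
    [NormedAddCommGroup HABC] [InnerProductSpace ℂ HABC] [CompleteSpace HABC]
    (TBC : HilbertTensor HB HC HBC) (TABC : HilbertTensor HA HBC HABC)
    (TAB : HilbertTensor HA HB HAB)
    {ιB ιBC ιC : Type*} (eB : HilbertBasis ιB ℂ HB) (eBC : HilbertBasis ιBC ℂ HBC)
    (c : HilbertBasis ιC ℂ HC)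
    (ρABC : HABC →L[ℂ] HABC) (hpos : ρABC.IsPositive)
    (ρAB : HAB →L[ℂ] HAB)
    (hptr : ∀ (x y : HA) (u w : HB),
      ⟪TAB.tmul x u, ρAB (TAB.tmul y w)⟫_ℂ
        = ∑' i, ⟪TABC.tmul x (TBC.tmul u (c i)),
            ρABC (TABC.tmul y (TBC.tmul w (c i)))⟫_ℂ) :
    LamB TAB eB ρAB ≤ LamB TABC eBC ρABC := by
  refine le_sInf ?_
  rintro _ ⟨σ, hσ, hσtc, hρσ, rfl⟩
  obtain ⟨τ, hτ, hτσ⟩ := TBC.exists_partialTrace c eBC hσ hσtc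
  obtain ⟨hτtc, hτtr⟩ := hτσ.isTraceClass_and_trAlong_le TBC c eBC hτ hσ hσtc eB
  have hρτ : ρAB ≤ TAB.map 1 τ :=
    le_of_partialTrace_le TBC TABC TAB c hpos hρσ hptr fun x y u w => by
      simpa only [TABC.inner_tmul_map_one_tmul, TAB.inner_tmul_map_one_tmul] using
        (hτσ u w).mul_left ⟪x, y⟫_ℂ
  exact sInf_le_of_le ⟨τ, hτ, hτtc, hρτ, rfl⟩ (EReal.coe_le_coe_iff.mpr hτtr)

/-- Data processing inequality for the min-entropy:
`Λ(ρ_AB|B) ≤ Λ(ρ_ABC|BC)` where `ρ_AB = tr_C ρ_ABC`, equivalently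
`H_min(ρ_ABC|BC) ≤ H_min(ρ_AB|B)`. -/
theorem min_entropy_data_processing
    {HA HB HC HBC HAB HABC : Type*}
    [NormedAddCommGroup HA] [InnerProductSpace ℂ HA] [TopologicalSpace.SeparableSpace HA]
    [NormedAddCommGroup HB] [InnerProductSpace ℂ HB] [CompleteSpace HB]
    [TopologicalSpace.SeparableSpace HB]
    [NormedAddCommGroup HC] [InnerProductSpace ℂ HC] [CompleteSpace HC]
    [TopologicalSpace.SeparableSpace HC]
    [NormedAddCommGroup HBC] [InnerProductSpace ℂ HBC] [CompleteSpace HBC]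
    [NormedAddCommGroup HAB] [InnerProductSpace ℂ HAB] [CompleteSpace HAB]
    [NormedAddCommGroup HABC] [InnerProductSpace ℂ HABC] [CompleteSpace HABC]
    (TBC : HilbertTensor HB HC HBC) (TABC : HilbertTensor HA HBC HABC)
    (TAB : HilbertTensor HA HB HAB)
    {ιB ιBC ιC ιABC : Type*} (eB : HilbertBasis ιB ℂ HB) (eBC : HilbertBasis ιBC ℂ HBC)
    (c : HilbertBasis ιC ℂ HC) (eABC : HilbertBasis ιABC ℂ HABC)
    (ρABC : HABC →L[ℂ] HABC) (hpos : ρABC.IsPositive) (htc : IsTraceClass eABC ρABC)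
    (ρAB : HAB →L[ℂ] HAB)
    (hptr : ∀ (x y : HA) (u w : HB),
      ⟪TAB.tmul x u, ρAB (TAB.tmul y w)⟫_ℂ
        = ∑' i, ⟪TABC.tmul x (TBC.tmul u (c i)),
            ρABC (TABC.tmul y (TBC.tmul w (c i)))⟫_ℂ) :
    LamB TAB eB ρAB ≤ LamB TABC eBC ρABC :=
  min_entropy_data_processing_general TBC TABC TAB eB eBC c ρABC hpos ρAB hptr
end
end

section
/- Monotonicity under projection: let ρ_AB be a density operator on H_A ⊗ H_B and σ_B a density operator on H_B; let P_k^A ≤ P_{k'}^A and P_k^B ≤ P_{k'}^B (k ≤ k') be increasing sequences of finite-rank orthogonal projections, and set ρ_AB^k = (P_k^A ⊗ P_k^B) ρ_AB (P_k^A ⊗ P_k^B), σ_B^k = P_k^B σ_B P_k^B. Then Λ(ρ_AB^k|σ_B^k) := inf{λ : λ P_k^A ⊗ σ_B^k ≥ ρ_AB^k} is monotonically increasing in k and bounded above by Λ(ρ_AB|σ_B) = inf{λ : λ id_A ⊗ σ_B ≥ ρ_AB}. -/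
open scoped InnerProductSpace ComplexOrder
open ContinuousLinearMap Filter Topology

set_option synthInstance.maxHeartbeats 1000000
set_option maxHeartbeats 1600000

/-!
With `Q k = P_k^A ⊗ P_k^B` and `τ = id_A ⊗ σ_B`, both `ρ_AB^k = Q k ρ Q k` and
`P_k^A ⊗ σ_B^k = Q k τ Q k` are compressions by `Q k`, and `Q k Q k' = Q k` for `k ≤ k'`.
Compressing `Q k' ρ Q k' ≤ λ Q k' τ Q k'` by `Q k` gives `Q k ρ Q k ≤ λ Q k τ Q k`, so every `λ`
admissible at level `k'` (or for the untruncated operators, `Q = 1`) is admissible at level `k`.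
-/

noncomputable section

/-- The paper's `Λ(a|b)`; `LamCond TP ρ σ` unfolds to `dominationInf ρ (TP.map 1 σ)`. -/
def dominationInf {R : Type*} [LE R] [SMul ℝ R] (a b : R) : EReal :=
  sInf {x : EReal | ∃ l : ℝ, x = (l : EReal) ∧ a ≤ l • b}

lemma dominationInf_le_dominationInf {R : Type*} [LE R] [SMul ℝ R]
    {a b a' b' : R} (h : ∀ l : ℝ, a ≤ l • b → a' ≤ l • b') :
    dominationInf a' b' ≤ dominationInf a b := by
  apply sInf_le_sInf
  rintro x ⟨l, rfl, hl⟩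
  exact ⟨l, rfl, h l hl⟩

section StarOrderedRing

variable {R : Type*} [Ring R] [StarRing R] [PartialOrder R] [StarOrderedRing R] [Module ℝ R]
  [IsScalarTower ℝ R R] [SMulCommClass ℝ R R]

lemma dominationInf_conj_le_conj {p q : R} (hp : IsSelfAdjoint p) (hq : IsSelfAdjoint q)
    (hqp : q * p = p) (a b : R) :
    dominationInf (p * a * p) (p * b * p) ≤ dominationInf (q * a * q) (q * b * q) := by
  have hpq : p * q = p := by simpa [hp.star_eq, hq.star_eq] using congrArg star hqp
  have hcompress : ∀ c : R, p * (q * c * q) * p = p * c * p := fun c => by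
    rw [show p * (q * c * q) * p = (p * q) * c * (q * p) by noncomm_ring, hpq, hqp]
  refine dominationInf_le_dominationInf fun l hl => ?_
  have := hp.conjugate_le_conjugate hl
  rwa [mul_smul_comm, smul_mul_assoc, hcompress, hcompress] at this

lemma dominationInf_conj_le {p : R} (hp : IsSelfAdjoint p) (a b : R) :
    dominationInf (p * a * p) (p * b * p) ≤ dominationInf a b := by
  simpa using dominationInf_conj_le_conj hp (IsSelfAdjoint.one R) (one_mul p) a b

end StarOrderedRing

namespace HilbertTensor

variable {HA HB H : Type*} [NormedAddCommGroup HA] [InnerProductSpace ℂ HA]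
  [NormedAddCommGroup HB] [InnerProductSpace ℂ HB]
  [NormedAddCommGroup H] [InnerProductSpace ℂ H] (TP : HilbertTensor HA HB H)

lemma ext_of_tmul {E : Type*} [AddCommGroup E] [Module ℂ E] [TopologicalSpace E] [T2Space E]
    {F G : H →L[ℂ] E} (h : ∀ a b, F (TP.tmul a b) = G (TP.tmul a b)) :
    F = G :=
  ContinuousLinearMap.ext_on TP.dense_span (by rintro _ ⟨a, b, rfl⟩; exact h a b)

lemma ext_inner_tmul {u v : H} (h : ∀ a b, ⟪u, TP.tmul a b⟫_ℂ = ⟪v, TP.tmul a b⟫_ℂ) :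
    u = v :=
  ext_inner_right ℂ fun w => congr($(TP.ext_of_tmul (F := innerSL ℂ u) (G := innerSL ℂ v) h) w)

lemma map_mul (S S' : HA →L[ℂ] HA) (T T' : HB →L[ℂ] HB) :
    TP.map (S * S') (T * T') = TP.map S T * TP.map S' T' :=
  TP.ext_of_tmul fun a b => by simp [TP.map_tmul]

lemma map_one_conj {P : HA →L[ℂ] HA} (hP : IsIdempotentElem P) (Q σ : HB →L[ℂ] HB) :
    TP.map P Q * TP.map 1 σ * TP.map P Q = TP.map P (Q * σ * Q) := by
  rw [← map_mul, ← map_mul, mul_one, hP.eq]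

variable [CompleteSpace HA] [CompleteSpace HB] [CompleteSpace H]

lemma adjoint_map (S : HA →L[ℂ] HA) (T : HB →L[ℂ] HB) :
    (TP.map S T).adjoint = TP.map S.adjoint T.adjoint :=
  TP.ext_of_tmul fun a b => TP.ext_inner_tmul fun a' b' => by
    rw [ContinuousLinearMap.adjoint_inner_left, TP.map_tmul, TP.map_tmul, TP.inner_tmul,
      TP.inner_tmul, ContinuousLinearMap.adjoint_inner_left,
      ContinuousLinearMap.adjoint_inner_left]

lemma isSelfAdjoint_map {S : HA →L[ℂ] HA} {T : HB →L[ℂ] HB} (hS : IsSelfAdjoint S)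
    (hT : IsSelfAdjoint T) : IsSelfAdjoint (TP.map S T) := by
  rw [ContinuousLinearMap.isSelfAdjoint_iff', adjoint_map, hS.adjoint_eq, hT.adjoint_eq]

end HilbertTensor

theorem LamCond_projected_monotone_general
    {HA HB H : Type*} [NormedAddCommGroup HA] [InnerProductSpace ℂ HA] [CompleteSpace HA]
    [NormedAddCommGroup HB] [InnerProductSpace ℂ HB] [CompleteSpace HB]
    [NormedAddCommGroup H] [InnerProductSpace ℂ H] [CompleteSpace H]
    (TP : HilbertTensor HA HB H)
    (ρ : H →L[ℂ] H) (σ : HB →L[ℂ] HB)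
    (PA : ℕ → HA →L[ℂ] HA) (PB : ℕ → HB →L[ℂ] HB)
    (hPA : ∀ k, IsOrthoProj (PA k)) (hPB : ∀ k, IsOrthoProj (PB k))
    (hmonoA : ∀ k k', k ≤ k' → PA k' ∘L PA k = PA k)
    (hmonoB : ∀ k k', k ≤ k' → PB k' ∘L PB k = PB k) :
    Monotone (fun k => sInf {x : EReal | ∃ l : ℝ, x = (l : EReal) ∧
        TP.map (PA k) (PB k) ∘L ρ ∘L TP.map (PA k) (PB k)
          ≤ l • TP.map (PA k) (PB k ∘L σ ∘L PB k)}) ∧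
    ∀ k, sInf {x : EReal | ∃ l : ℝ, x = (l : EReal) ∧
        TP.map (PA k) (PB k) ∘L ρ ∘L TP.map (PA k) (PB k)
          ≤ l • TP.map (PA k) (PB k ∘L σ ∘L PB k)}
      ≤ LamCond TP ρ σ := by
  set Q := fun k => TP.map (PA k) (PB k)
  set τ := TP.map 1 σ
  have hQ : ∀ k, IsSelfAdjoint (Q k) := fun k => TP.isSelfAdjoint_map (hPA k).1 (hPB k).1
  have hQQ : ∀ {k k'}, k ≤ k' → Q k' * Q k = Q k := fun hk => by
    rw [← TP.map_mul]; exact congrArg₂ TP.map (hmonoA _ _ hk) (hmonoB _ _ hk)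
  have hcompress : ∀ k, sInf {x : EReal | ∃ l : ℝ, x = (l : EReal) ∧
        TP.map (PA k) (PB k) ∘L ρ ∘L TP.map (PA k) (PB k)
          ≤ l • TP.map (PA k) (PB k ∘L σ ∘L PB k)}
      = dominationInf (Q k * ρ * Q k) (Q k * τ * Q k) := fun k => by
    rw [TP.map_one_conj (hPA k).2]
    show dominationInf (Q k * (ρ * Q k)) (TP.map (PA k) (PB k * (σ * PB k))) = _
    simp only [mul_assoc]
  simp only [hcompress]
  exact ⟨fun k k' hk => dominationInf_conj_le_conj (hQ k) (hQ k') (hQQ hk) ρ τ,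
    fun k => dominationInf_conj_le (hQ k) ρ τ⟩

/-- `Λ(ρ_AB^k|σ_B^k)` is monotonically increasing in `k` and bounded
above by `Λ(ρ_AB|σ_B)`. -/
theorem LamCond_projected_monotone
    {HA HB H : Type*} [NormedAddCommGroup HA] [InnerProductSpace ℂ HA] [CompleteSpace HA]
    [TopologicalSpace.SeparableSpace HA]
    [NormedAddCommGroup HB] [InnerProductSpace ℂ HB] [CompleteSpace HB]
    [TopologicalSpace.SeparableSpace HB]
    [NormedAddCommGroup H] [InnerProductSpace ℂ H] [CompleteSpace H]
    [TopologicalSpace.SeparableSpace H]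
    (TP : HilbertTensor HA HB H)
    {ι κ : Type*} (e : HilbertBasis ι ℂ H) (f : HilbertBasis κ ℂ HB)
    (ρ : H →L[ℂ] H) (σ : HB →L[ℂ] HB)
    (hρ : ρ.IsPositive) (hρtc : IsTraceClass e ρ) (hρtr : trAlong e ρ = 1)
    (hσ : σ.IsPositive) (hσtc : IsTraceClass f σ) (hσtr : trAlong f σ = 1)
    (PA : ℕ → HA →L[ℂ] HA) (PB : ℕ → HB →L[ℂ] HB)
    (hPA : ∀ k, IsOrthoProj (PA k)) (hPB : ∀ k, IsOrthoProj (PB k))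
    (hfinA : ∀ k, FiniteDimensional ℂ (LinearMap.range ((PA k : HA →ₗ[ℂ] HA))))
    (hfinB : ∀ k, FiniteDimensional ℂ (LinearMap.range ((PB k : HB →ₗ[ℂ] HB))))
    (hmonoA : ∀ k k', k ≤ k' → PA k' ∘L PA k = PA k)
    (hmonoB : ∀ k k', k ≤ k' → PB k' ∘L PB k = PB k) :
    Monotone (fun k => sInf {x : EReal | ∃ l : ℝ, x = (l : EReal) ∧
        TP.map (PA k) (PB k) ∘L ρ ∘L TP.map (PA k) (PB k)
          ≤ l • TP.map (PA k) (PB k ∘L σ ∘L PB k)}) ∧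
    ∀ k, sInf {x : EReal | ∃ l : ℝ, x = (l : EReal) ∧
        TP.map (PA k) (PB k) ∘L ρ ∘L TP.map (PA k) (PB k)
          ≤ l • TP.map (PA k) (PB k ∘L σ ∘L PB k)}
      ≤ LamCond TP ρ σ :=
  LamCond_projected_monotone_general TP ρ σ PA PB hPA hPB hmonoA hmonoB

end
end
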